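/- Let G and G' be finite simple graphs, strongly regular with parameters (n, d, λ, μ) and (n, d, λ, μ') respectively, where μ ≥ 1 and μ' ≥ 1 (same n, d, λ but possibly μ ≠ μ'). Then for every k ∈ {1, 2}, every vertex v of G and every vertex v' of G' have equal depth-k IGEL encodings; i.e., IGEL encodings cannot capture the parameter μ of a strongly regular graph. -/
import Mathlib


open Classical in
/-- The closed `k`-ball `B_k(v) = {u | dist_G(u, v) ≤ k}` (as a finset of vertices that
are reachable from `v` within distance `k`). -/
noncomputable def kball {V : Type*} [Fintype V] (G : SimpleGraph V) (v : V) (k : ℕ) :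
    Finset V :=
  Finset.univ.filter fun u => G.Reachable u v ∧ G.dist u v ≤ k

open Classical in
/-- `d_S(u|v)`: the degree of `u` in the subgraph of `G` induced on `B_k(v)`. -/
noncomputable def dSub {V : Type*} [Fintype V] (G : SimpleGraph V) (v : V) (k : ℕ)
    (u : V) : ℕ :=
  ((kball G v k).filter fun w => G.Adj u w).card

/-- The depth-`k` IGEL encoding of `v`: the multiset of pairs
`(dist_G(u, v), d_S(u|v))` over all `u ∈ B_k(v)`. -/
noncomputable def igel {V : Type*} [Fintype V] (G : SimpleGraph V) (k : ℕ) (v : V) :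
    Multiset (ℕ × ℕ) :=
  (kball G v k).val.map fun u => (G.dist u v, dSub G v k u)

section helpers

variable {V : Type*} [Fintype V] {G : SimpleGraph V} [DecidableRel G.Adj] [DecidableEq V]
  {n d l m : ℕ}

lemma kball_one (v : V) : kball G v 1 = insert v (G.neighborFinset v) := by
  ext u
  simp only [kball, Finset.mem_filter, Finset.mem_univ, true_and, Finset.mem_insert,
    SimpleGraph.mem_neighborFinset]
  constructor
  · rintro ⟨hr, hd⟩
    by_cases huv : u = v
    · exact Or.inl huv
    · right
      have h1 : G.dist u v = 1 := by
        have := hr.dist_eq_zero_iff.not.mpr huv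
        omega
      exact (SimpleGraph.dist_eq_one_iff_adj.mp h1).symm
  · rintro (rfl | hadj)
    · exact ⟨SimpleGraph.Reachable.refl u, by rw [SimpleGraph.dist_self]; omega⟩
    · exact ⟨(hadj.symm).reachable, le_of_eq (SimpleGraph.dist_eq_one_iff_adj.mpr hadj.symm)⟩

lemma dSub_one_self (v : V) : dSub G v 1 v = G.degree v := by
  rw [dSub, kball_one, Finset.filter_congr_decidable]
  have : (insert v (G.neighborFinset v)).filter (fun w => G.Adj v w) = G.neighborFinset v := by
    ext w
    simp only [Finset.mem_filter, Finset.mem_insert, SimpleGraph.mem_neighborFinset]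
    constructor
    · rintro ⟨_, ha⟩; exact ha
    · intro ha; exact ⟨Or.inr ha, ha⟩
  rw [this, SimpleGraph.card_neighborFinset_eq_degree]

lemma dSub_one_adj (h : G.IsSRGWith n d l m) {v u : V} (hadj : G.Adj v u) :
    dSub G v 1 u = l + 1 := by
  rw [dSub, kball_one, Finset.filter_congr_decidable]
  have hins : (insert v (G.neighborFinset v)).filter (fun w => G.Adj u w)
      = insert v ((G.neighborFinset v).filter (fun w => G.Adj u w)) := by
    ext w
    simp only [Finset.mem_filter, Finset.mem_insert, SimpleGraph.mem_neighborFinset]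
    constructor
    · rintro ⟨hw | hw, ha⟩
      · exact Or.inl hw
      · exact Or.inr ⟨hw, ha⟩
    · rintro (rfl | ⟨hw, ha⟩)
      · exact ⟨Or.inl rfl, hadj.symm⟩
      · exact ⟨Or.inr hw, ha⟩
  rw [hins, Finset.card_insert_of_notMem (by simp [G.irrefl])]
  have hcn : (G.neighborFinset v).filter (fun w => G.Adj u w)
      = (G.commonNeighbors u v).toFinset := by
    ext w
    simp only [Finset.mem_filter, SimpleGraph.mem_neighborFinset, Set.mem_toFinset,
      SimpleGraph.mem_commonNeighbors]
    tauto
  rw [hcn, Set.toFinset_card, h.of_adj u v hadj.symm]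

lemma igel_one (h : G.IsSRGWith n d l m) (v : V) :
    igel G 1 v = (0, d) ::ₘ Multiset.replicate d (1, l + 1) := by
  rw [igel, kball_one]
  have hv : v ∉ G.neighborFinset v := by simp [G.irrefl]
  rw [Finset.insert_val, Multiset.ndinsert_of_notMem (by simpa using hv), Multiset.map_cons]
  congr 1
  · rw [SimpleGraph.dist_self, dSub_one_self, h.regular v]
  · have : ∀ u ∈ (G.neighborFinset v).val, (G.dist u v, dSub G v 1 u) = (1, l + 1) := by
      intro u hu
      rw [Finset.mem_val, SimpleGraph.mem_neighborFinset] at hu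
      rw [SimpleGraph.dist_eq_one_iff_adj.mpr hu.symm, dSub_one_adj h hu]
    rw [Multiset.map_congr rfl this, Multiset.map_const']
    congr 1
    rw [Finset.card_val, SimpleGraph.card_neighborFinset_eq_degree, h.regular v]

lemma kball_two (h : G.IsSRGWith n d l m) (hm : 1 ≤ m) (v : V) :
    kball G v 2 = Finset.univ := by
  ext u
  simp only [kball, Finset.mem_filter, Finset.mem_univ, true_and, iff_true]
  by_cases huv : u = v
  · subst huv
    exact ⟨SimpleGraph.Reachable.refl u, by rw [SimpleGraph.dist_self]; omega⟩
  by_cases hadj : G.Adj u v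
  · exact ⟨hadj.reachable, le_of_eq (SimpleGraph.dist_eq_one_iff_adj.mpr hadj) |>.trans one_le_two⟩
  · have hcard : Fintype.card (G.commonNeighbors u v) = m := h.of_not_adj huv hadj
    have : Nonempty (G.commonNeighbors u v) := by
      rw [← Fintype.card_pos_iff, hcard]; omega
    obtain ⟨w, hw⟩ := this
    rw [SimpleGraph.mem_commonNeighbors] at hw
    exact ⟨⟨.cons hw.1 (.cons hw.2.symm .nil)⟩,
      le_trans (SimpleGraph.dist_le (.cons hw.1 (.cons hw.2.symm .nil))) (by simp)⟩

lemma dSub_two (h : G.IsSRGWith n d l m) (hm : 1 ≤ m) (v u : V) :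
    dSub G v 2 u = d := by
  rw [dSub, kball_two h hm, Finset.filter_congr_decidable]
  have : (Finset.univ.filter fun w => G.Adj u w) = G.neighborFinset u := by
    ext w; simp [SimpleGraph.mem_neighborFinset]
  rw [this, SimpleGraph.card_neighborFinset_eq_degree, h.regular u]

lemma igel_two (h : G.IsSRGWith n d l m) (hm : 1 ≤ m) (v : V) :
    igel G 2 v = (0, d) ::ₘ (Multiset.replicate d (1, d)
      + Multiset.replicate (n - (d + 1)) (2, d)) := by
  rw [igel, kball_two h hm]
  set s : Finset V := insert v (G.neighborFinset v) with hs
  have hv : v ∉ G.neighborFinset v := by simp [G.irrefl]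
  have huniv : s.disjUnion sᶜ disjoint_compl_right = Finset.univ := by
    rw [Finset.disjUnion_eq_union, Finset.union_compl]
  have hval : (Finset.univ : Finset V).val = s.val + sᶜ.val := by
    rw [← huniv]; rfl
  rw [hval, Multiset.map_add, hs, Finset.insert_val,
    Multiset.ndinsert_of_notMem (by simpa using hv), Multiset.map_cons,
    SimpleGraph.dist_self, dSub_two h hm, Multiset.cons_add]
  congr 1
  congr 1
  · have : ∀ u ∈ (G.neighborFinset v).val, (G.dist u v, dSub G v 2 u) = (1, d) := by
      intro u hu
      rw [Finset.mem_val, SimpleGraph.mem_neighborFinset] at hu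
      rw [SimpleGraph.dist_eq_one_iff_adj.mpr hu.symm, dSub_two h hm]
    rw [Multiset.map_congr rfl this, Multiset.map_const']
    congr 1
    rw [Finset.card_val, SimpleGraph.card_neighborFinset_eq_degree, h.regular v]
  · have : ∀ u ∈ sᶜ.val, (G.dist u v, dSub G v 2 u) = (2, d) := by
      intro u hu
      rw [Finset.mem_val, Finset.mem_compl, hs, Finset.mem_insert,
        SimpleGraph.mem_neighborFinset] at hu
      push_neg at hu
      have hmem := (kball_two h hm v) ▸ (Finset.mem_univ u)
      simp only [kball, Finset.mem_filter] at hmem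
      have hle : G.dist u v ≤ 2 := hmem.2.2
      have hr : G.Reachable u v := hmem.2.1
      have h0 : G.dist u v ≠ 0 := hr.dist_eq_zero_iff.not.mpr hu.1
      have h1 : G.dist u v ≠ 1 := fun hc => hu.2 (SimpleGraph.dist_eq_one_iff_adj.mp hc).symm
      have h2 : G.dist u v = 2 := by omega
      rw [h2, dSub_two h hm]
    rw [Multiset.map_congr rfl this, Multiset.map_const']
    congr 1
    rw [Finset.card_val, Finset.card_compl, hs,
      Finset.card_insert_of_notMem hv, SimpleGraph.card_neighborFinset_eq_degree,
      h.regular v, h.card]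

end helpers


/-- If `G` is strongly regular with parameters `(n, d, l, m)`, `m ≥ 1`,
and `G'` is strongly regular with parameters `(n, d, l, m')`, `m' ≥ 1` (same `n, d, l`
but possibly `m ≠ m'`), then for every `k ∈ {1, 2}`, every vertex `v` of `G` and every
vertex `v'` of `G'` have equal depth-`k` IGEL encodings: IGEL cannot capture the
parameter `μ` of a strongly regular graph. -/
theorem srg_igel_cannot_capture_mu {V V' : Type*} [Fintype V] [Fintype V']
    {G : SimpleGraph V} {G' : SimpleGraph V'} [DecidableRel G.Adj] [DecidableRel G'.Adj]
    {n d l m m' : ℕ}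
    (h : G.IsSRGWith n d l m) (hm : 1 ≤ m)
    (h' : G'.IsSRGWith n d l m') (hm' : 1 ≤ m') :
    ∀ k : ℕ, k = 1 ∨ k = 2 → ∀ (v : V) (v' : V'), igel G k v = igel G' k v' := by
  classical
  rintro k (rfl | rfl) v v'
  · rw [igel_one h, igel_one h']
  · rw [igel_two h hm, igel_two h' hm']
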